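/- Let ℓ ≥ 1, δ > 0, and let T, S be finite sets of reals with the property that every two distinct points of T are at distance at least 4(ℓ+1)δ, every two distinct points of S are at distance strictly greater than 2(ℓ+1)δ, S is a maximal such subset of a set C satisfying T ⊆ C, and every point of C is within (ℓ+1)δ of some point of T. Then |S| = |T|, and when the elements of S and T are listed in increasing order as s_1 < ... < s_m and t_1 < ... < t_m, we have |s_i - t_i| ≤ 2(ℓ+1)δ for all i. -/
import Mathlib


/-- If `T` has separation at least `4(ℓ+1)δ`, `S` is a maximal subset of `C` with separation
strictly greater than `2(ℓ+1)δ`, `T ⊆ C`, and every point of `C` is within `(ℓ+1)δ` of `T`,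
then `|S| = |T|` and the increasing enumerations of `S` and `T` are within `2(ℓ+1)δ`
of each other pointwise. -/
theorem packing_card_eq_and_dmax_le
    (ℓ : ℕ) (hℓ : 1 ≤ ℓ) (δ : ℝ) (hδ : 0 < δ)
    (T S : Finset ℝ) (C : Set ℝ)
    (hTC : (T : Set ℝ) ⊆ C)
    (hTsep : ∀ a ∈ T, ∀ b ∈ T, a ≠ b → 4 * ((ℓ : ℝ) + 1) * δ ≤ |a - b|)
    (hSC : (S : Set ℝ) ⊆ C)
    (hSsep : ∀ a ∈ S, ∀ b ∈ S, a ≠ b → 2 * ((ℓ : ℝ) + 1) * δ < |a - b|)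
    (hSmax : ∀ S' : Finset ℝ, (S' : Set ℝ) ⊆ C →
      (∀ a ∈ S', ∀ b ∈ S', a ≠ b → 2 * ((ℓ : ℝ) + 1) * δ < |a - b|) → S ⊆ S' → S' = S)
    (hC : ∀ c ∈ C, ∃ t ∈ T, |c - t| ≤ ((ℓ : ℝ) + 1) * δ) :
    ∃ h : S.card = T.card, ∀ i : Fin T.card,
      |((S.orderIsoOfFin h i : ℝ)) - ((T.orderIsoOfFin rfl i : ℝ))| ≤ 2 * ((ℓ : ℝ) + 1) * δ := by
  set D : ℝ := ((ℓ : ℝ) + 1) * δ with hD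
  have hDpos : 0 < D := by positivity
  -- nearest-point map
  have hex : ∀ s ∈ S, ∃ t ∈ T, |s - t| ≤ D := fun s hs => hC s (hSC hs)
  classical
  set F : ℝ → ℝ := fun s => if h : ∃ t ∈ T, |s - t| ≤ D then h.choose else 0 with hF
  have hFmem : ∀ s ∈ S, F s ∈ T := by
    intro s hs
    have h := hex s hs
    simp only [hF, dif_pos h]
    exact h.choose_spec.1
  have hFnear : ∀ s ∈ S, |s - F s| ≤ D := by
    intro s hs
    have h := hex s hs
    simp only [hF, dif_pos h]
    exact h.choose_spec.2
  -- every t ∈ T has a point of S within 2D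
  have hTnear : ∀ t ∈ T, ∃ s ∈ S, |s - t| ≤ 2 * D := by
    intro t ht
    by_contra hcon
    push_neg at hcon
    have hgt : ∀ s ∈ S, 2 * D < |s - t| := fun s hs => hcon s hs
    have h2 : 2 * ((ℓ : ℝ) + 1) * δ = 2 * D := by ring
    have hins : insert t S = S := by
      apply hSmax
      · intro x hx
        simp only [Finset.coe_insert, Set.mem_insert_iff] at hx
        rcases hx with rfl | hx
        · exact hTC ht
        · exact hSC hx
      · intro a ha b hb hab
        rw [h2]
        simp only [Finset.mem_insert] at ha hb
        rcases ha with rfl | ha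
        · rcases hb with rfl | hb
          · exact absurd rfl hab
          · rw [abs_sub_comm]; exact hgt b hb
        · rcases hb with rfl | hb
          · exact hgt a ha
          · rw [← h2]; exact hSsep a ha b hb hab
      · exact Finset.subset_insert _ _
    have htS : t ∈ S := hins ▸ Finset.mem_insert_self t S
    have := hgt t htS
    simp at this
    linarith
  -- F maps S onto T
  have hTsub : T ⊆ S.image F := by
    intro t ht
    obtain ⟨s, hs, hst⟩ := hTnear t ht
    have h1 : |t - F s| ≤ 3 * D := by
      have := hFnear s hs
      have : |t - F s| ≤ |t - s| + |s - F s| := abs_sub_le _ _ _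
      have h2 : |t - s| = |s - t| := abs_sub_comm _ _
      linarith [hFnear s hs]
    have : t = F s := by
      by_contra hne
      have := hTsep t ht (F s) (hFmem s hs) hne
      have h4 : 4 * ((ℓ : ℝ) + 1) * δ = 4 * D := by ring
      rw [h4] at this
      linarith
    exact Finset.mem_image.2 ⟨s, hs, this.symm⟩
  have hinj : Set.InjOn F S := by
    intro a ha b hb hab
    by_contra hne
    have hsep := hSsep a ha b hb hne
    have h1 := hFnear a ha
    have h2 := hFnear b hb
    have : |a - b| ≤ |a - F a| + |F b - b| := by
      calc |a - b| = |(a - F a) + (F b - b)| := by rw [hab]; ring_nf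
        _ ≤ |a - F a| + |F b - b| := abs_add_le _ _
    rw [abs_sub_comm (F b) b] at this
    have h3 : 2 * ((ℓ : ℝ) + 1) * δ = 2 * D := by ring
    rw [h3] at hsep
    linarith
  have himg : S.image F = T :=
    Finset.Subset.antisymm (fun x hx => by
      obtain ⟨s, hs, rfl⟩ := Finset.mem_image.1 hx; exact hFmem s hs) hTsub
  have hcard : S.card = T.card := by
    rw [← himg, Finset.card_image_of_injOn hinj]
  refine ⟨hcard, ?_⟩
  -- the composed map agrees with the sorted enumeration of T
  set g : Fin T.card → ℝ := fun i => F (S.orderEmbOfFin hcard i) with hg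
  have hgmem : ∀ i, g i ∈ T := fun i => hFmem _ (Finset.orderEmbOfFin_mem S hcard i)
  have hgmono : StrictMono g := by
    intro i j hij
    set a := S.orderEmbOfFin hcard i
    set b := S.orderEmbOfFin hcard j
    have hab : a < b := (S.orderEmbOfFin hcard).strictMono hij
    have haS : a ∈ S := Finset.orderEmbOfFin_mem S hcard i
    have hbS : b ∈ S := Finset.orderEmbOfFin_mem S hcard j
    have hsep := hSsep a haS b hbS (ne_of_lt hab)
    have h3 : 2 * ((ℓ : ℝ) + 1) * δ = 2 * D := by ring
    rw [h3, abs_sub_comm, abs_of_pos (by linarith)] at hsep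
    have h1 := hFnear a haS
    have h2 := hFnear b hbS
    rw [abs_le] at h1 h2
    show F a < F b
    have := h1.2
    have := h2.1
    linarith [neg_le_of_abs_le (hFnear b hbS)]
  have hgeq : g = T.orderEmbOfFin rfl := Finset.orderEmbOfFin_unique rfl hgmem hgmono
  intro i
  have h1 : ((T.orderIsoOfFin rfl i : ℝ)) = g i := by
    rw [hgeq]; rfl
  have h2 : ((S.orderIsoOfFin hcard i : ℝ)) = S.orderEmbOfFin hcard i := rfl
  rw [h1, h2, hg]
  have := hFnear _ (Finset.orderEmbOfFin_mem S hcard i)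
  have h3 : 2 * ((ℓ : ℝ) + 1) * δ = 2 * D := by ring
  rw [h3]
  linarith
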